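/- MAJ(π) equals the total count of occurrences of the vincular patterns \underline{21} + 1\underline{32} + 2\underline{31} + 3\underline{21} in π, for every permutation π. -/

import Mathlib

/-- Value of the word `l` at 1-based position `i` (0 if out of range). -/
def wv (l : List ℕ) (i : ℕ) : ℕ := l.getD (i - 1) 0

/-- Descent set (1-based positions `i < n` with `wᵢ > wᵢ₊₁`). -/
def DSet (l : List ℕ) : Finset ℕ :=
  (Finset.Ico 1 l.length).filter fun i => wv l (i + 1) < wv l i

def des (l : List ℕ) : ℕ := (DSet l).card

def MAJ (l : List ℕ) : ℕ := ∑ i ∈ DSet l, i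

/-- First letter. -/
def Fst (l : List ℕ) : ℕ := wv l 1

/-- Number of triples (i, i+1, j) with i+1 < j ≤ n satisfying the pattern
condition `p a b c` where a = wᵢ, b = wᵢ₊₁, c = wⱼ. -/
def tripCount (l : List ℕ) (p : ℕ → ℕ → ℕ → Bool) : ℕ :=
  (((Finset.Ico 1 l.length) ×ˢ (Finset.Icc 1 l.length)).filter
    (fun q => q.1 + 1 < q.2 ∧ p (wv l q.1) (wv l (q.1 + 1)) (wv l q.2) = true)).card

/-- Number of triples (i, j, j+1) with i < j, j+1 ≤ n satisfying
`p a b c` where a = wᵢ, b = wⱼ, c = wⱼ₊₁. -/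
def tripCount2 (l : List ℕ) (p : ℕ → ℕ → ℕ → Bool) : ℕ :=
  (((Finset.Icc 1 l.length) ×ˢ (Finset.Ico 1 l.length)).filter
    (fun q => q.1 < q.2 ∧ p (wv l q.1) (wv l q.2) (wv l (q.2 + 1)) = true)).card

/-- STAT on permutations: occurrences of 21 + 132 + 213 + 321 (first two letters adjacent). -/
def STATp (l : List ℕ) : ℕ :=
  des l + tripCount l (fun a b c =>
    decide ((a < c ∧ c < b) ∨ (b < a ∧ a < c) ∨ (c < b ∧ b < a)))

/-- STAT on words: occurrences of 213 + 212 + 132 + 121 + 321 + 21 (first two letters adjacent). -/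
def STATw (l : List ℕ) : ℕ :=
  des l + tripCount l (fun a b c =>
    decide ((b < a ∧ a < c) ∨ (b < a ∧ a = c) ∨ (a < c ∧ c < b) ∨
            (a = c ∧ c < b) ∨ (c < b ∧ b < a)))

/-- Standardization (coding map) of a word. -/
def stdz (l : List ℕ) : List ℕ :=
  (List.range l.length).map fun i =>
    ((List.range l.length).filter fun j =>
      decide (l.getD j 0 < l.getD i 0 ∨ (l.getD j 0 = l.getD i 0 ∧ j ≤ i))).length

/-- Inverse descent set: values v of the standardization such that v+1 occurs before v. -/
def IdSet (l : List ℕ) : Finset ℕ :=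
  (Finset.Icc 1 l.length).filter fun v =>
    ∃ i ∈ Finset.range l.length, ∃ j ∈ Finset.range l.length,
      j < i ∧ (stdz l).getD i 0 = v ∧ (stdz l).getD j 0 = v + 1

def ides (l : List ℕ) : ℕ := (IdSet l).card

def IMAJ (l : List ℕ) : ℕ := ∑ i ∈ IdSet l, i

/-- `l` is a permutation of {1, …, n} written in one-line notation. -/
def IsPermList (l : List ℕ) : Prop := l.Perm (List.range' 1 l.length)

def INV (l : List ℕ) : ℕ :=
  (((Finset.Icc 1 l.length) ×ˢ (Finset.Icc 1 l.length)).filter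
    (fun q => q.1 < q.2 ∧ wv l q.2 < wv l q.1)).card

/-!
Fix a descent `wⱼ > wⱼ₊₁`. Since the letters are distinct, each of the `j - 1` earlier letters
`wᵢ` lies below, between or above the pair, i.e. completes it to exactly one of `1(32)`, `2(31)`,
`3(21)`. So these three patterns together count `∑_{j ∈ Des} (j - 1)`, and the pattern `(21)`
supplies the missing `∑_{j ∈ Des} 1`.
-/

lemma IsPermList.nodup {l : List ℕ} (hperm : IsPermList l) : l.Nodup :=
  hperm.nodup_iff.mpr List.nodup_range'

lemma wv_inj_of_nodup {l : List ℕ} (hl : l.Nodup) {i j : ℕ}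
    (hi1 : 1 ≤ i) (hi2 : i ≤ l.length) (hj1 : 1 ≤ j) (hj2 : j ≤ l.length)
    (h : wv l i = wv l j) : i = j := by
  unfold wv at h
  rw [List.getD_eq_getElem l 0 (by omega), List.getD_eq_getElem l 0 (by omega),
    hl.getElem_inj_iff] at h
  omega

lemma vincular_patterns_iff_lt {α : Type*} [LinearOrder α] {a b c : α}
    (hab : a ≠ b) (hac : a ≠ c) :
    (a < c ∧ c < b) ∨ (c < a ∧ a < b) ∨ (c < b ∧ b < a) ↔ c < b := by
  constructor
  · rintro (⟨h₁, h₂⟩ | ⟨h₁, h₂⟩ | ⟨h₁, -⟩)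
    exacts [h₂, h₁.trans h₂, h₁]
  · intro hcb
    rcases hac.lt_or_gt with hac | hca
    · exact Or.inl ⟨hac, hcb⟩
    · rcases hab.lt_or_gt with hab | hba
      exacts [Or.inr (Or.inl ⟨hca, hab⟩), Or.inr (Or.inr ⟨hcb, hba⟩)]

lemma tripCount2_vincular_eq {l : List ℕ} (hl : l.Nodup) :
    tripCount2 l (fun a b c => decide ((a < c ∧ c < b) ∨ (c < a ∧ a < b) ∨ (c < b ∧ b < a)))
      = tripCount2 l (fun _ b c => decide (c < b)) := by
  unfold tripCount2
  congr 1
  refine Finset.filter_congr fun q hq => and_congr_right fun hij => ?_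
  simp only [Finset.mem_product, Finset.mem_Icc, Finset.mem_Ico] at hq
  simp only [decide_eq_true_eq]
  refine vincular_patterns_iff_lt (fun h => ?_) (fun h => ?_)
  · have := wv_inj_of_nodup hl hq.1.1 hq.1.2 hq.2.1 hq.2.2.le h; omega
  · have := wv_inj_of_nodup hl hq.1.1 hq.1.2 (by omega) (by omega) h; omega

lemma tripCount2_descent (l : List ℕ) :
    tripCount2 l (fun _ b c => decide (c < b)) = ∑ j ∈ DSet l, (j - 1) := by
  rw [tripCount2, Finset.card_filter, Finset.sum_product_right, DSet, Finset.sum_filter]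
  refine Finset.sum_congr rfl fun j hj => ?_
  have hjn := (Finset.mem_Ico.mp hj).2
  simp only [decide_eq_true_eq]
  split_ifs with hdes
  · have : (Finset.Icc 1 l.length).filter (· < j) = Finset.Ico 1 j := by
      ext x; simp only [Finset.mem_filter, Finset.mem_Icc, Finset.mem_Ico]; omega
    simp [hdes, Finset.sum_boole, this]
  · simp [hdes]

lemma MAJ_eq_sum_pred_add_des (l : List ℕ) : MAJ l = ∑ j ∈ DSet l, (j - 1) + des l := by
  rw [MAJ, des, Finset.card_eq_sum_ones, ← Finset.sum_add_distrib]
  refine Finset.sum_congr rfl fun j hj => ?_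
  have : 1 ≤ j := (Finset.mem_Ico.mp (Finset.mem_filter.mp hj).1).1
  omega

/-- MAJ equals the number of occurrences of the vincular patterns
21 + 1(32) + 2(31) + 3(21) (adjacency on the last two letters). -/
theorem stmt19 (l : List ℕ) (hperm : IsPermList l) :
    MAJ l = des l + tripCount2 l (fun a b c =>
      decide ((a < c ∧ c < b) ∨ (c < a ∧ a < b) ∨ (c < b ∧ b < a))) := by
  rw [MAJ_eq_sum_pred_add_des, tripCount2_vincular_eq hperm.nodup, tripCount2_descent, add_comm]
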